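/- (Box uncertainty: optimal solution.) For box uncertainty with greatest element d̂, let x̲ be the earliest schedule of G(p+d̂), x̄ the latest schedule of G(p) with x̄_t = M, H* = {i ∈ J : x̲_i ≤ x̄_i}, and x_i = min(x̲_i, x̄_i) for all i. Then x is a schedule of G(p) with x_t ≤ M and H* is x-anchored; hence (x, H*) is an optimal solution of (AnchRob) for any nonnegative weights. -/

import Mathlib

/-- Length of a path (given as a list of vertices) when each arc `(i,j)` has
length `q i` (the duration of its source vertex). -/
def PathLen {V : Type*} (q : V → ℝ) (l : List V) : ℝ := (l.dropLast.map q).sum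

/-- `l` is a path from `i` to `j` in the digraph with arc relation `A`. -/
def IsPath {V : Type*} (A : V → V → Prop) (i j : V) (l : List V) : Prop :=
  l ≠ [] ∧ l.Chain' A ∧ l.head? = some i ∧ l.getLast? = some j

/-- Length of a path for arc-indexed weights `w`. -/
def LenW {V : Type*} (w : V → V → ℝ) : List V → ℝ
  | a :: b :: l => w a b + LenW w (b :: l)
  | _ => 0

/-- `x` is a schedule of the precedence graph `(V, A)` with durations `q` and source `s`. -/
def Sched {V : Type*} (A : V → V → Prop) (s : V) (q x : V → ℝ) : Prop :=
  x s = 0 ∧ (∀ v, 0 ≤ x v) ∧ ∀ i j, A i j → q i ≤ x j - x i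

/-- `H` is `x`-anchored for the uncertainty set `Δ`. -/
def XAnchored {V : Type*} (A : V → V → Prop) (s : V) (p : V → ℝ)
    (Δ : Set (V → ℝ)) (x : V → ℝ) (H : Set V) : Prop :=
  ∀ δ ∈ Δ, ∃ y, Sched A s (fun v => p v + δ v) y ∧ ∀ i ∈ H, y i = x i

/-- `L` is the longest `i`–`j` path length under durations `q`. -/
def IsLongest {V : Type*} (A : V → V → Prop) (q : V → ℝ) (i j : V) (L : ℝ) : Prop :=
  IsGreatest {r | ∃ l, IsPath A i j l ∧ PathLen q l = r} L

/-- `L` is the worst-case longest `i`–`j` path length over the uncertainty set `Δ`. -/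
def IsWorst {V : Type*} (A : V → V → Prop) (p : V → ℝ) (Δ : Set (V → ℝ))
    (i j : V) (L : ℝ) : Prop :=
  IsGreatest {r | ∃ δ ∈ Δ, ∃ l, IsPath A i j l ∧ PathLen (fun v => p v + δ v) l = r} L

/-!
The earliest schedule `x̲` of `G(p + d̂)` is, by monotonicity in the durations, a schedule of every
`G(p + δ)` with `δ ≤ d̂`, so `x` anchors every job at which it agrees with `x̲`. The latest-start
bounds `M - L⁰(i, t)` satisfy the precedence constraints of `G(p)` as well, hence so does their
pointwise minimum `x` with `x̲`. Conversely, if a schedule `x'` of makespan at most `M` anchors `j`,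
then `x'_j` is the start of `j` in a schedule of `G(p + d̂)`, so `x̲_j ≤ x'_j ≤ M - L⁰(j, t)`:
every anchored set lies in `H*`, and the weights are nonnegative.
-/

section Paths

variable {V : Type*} {A : V → V → Prop}

theorem pathLen_nonneg {q : V → ℝ} (hq : ∀ v, 0 ≤ q v) (l : List V) : 0 ≤ PathLen q l :=
  List.sum_nonneg fun _ hr => by
    obtain ⟨a, -, rfl⟩ := List.mem_map.1 hr
    exact hq a

theorem IsPath.cons {i j k : V} {l : List V} (hl : IsPath A j k l) (hij : A i j) :
    IsPath A i k (i :: l) := by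
  obtain ⟨hne, hc, hh, hg⟩ := hl
  obtain ⟨m, rfl⟩ := List.head?_eq_some_iff.1 hh
  exact ⟨List.cons_ne_nil _ _, List.isChain_cons_cons.2 ⟨hij, hc⟩, rfl, by simpa using hg⟩

theorem IsPath.pathLen_cons {j k : V} {l : List V} (hl : IsPath A j k l) (q : V → ℝ) (i : V) :
    PathLen q (i :: l) = q i + PathLen q l := by
  obtain ⟨m, rfl⟩ := List.head?_eq_some_iff.1 hl.2.2.1
  simp [PathLen]

theorem IsPath.concat {i j k : V} {l : List V} (hl : IsPath A i j l) (hjk : A j k) :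
    IsPath A i k (l ++ [k]) := by
  obtain ⟨hne, hc, hh, hg⟩ := hl
  refine ⟨by simp, List.isChain_append.2 ⟨hc, List.isChain_singleton k, ?_⟩, ?_, by simp⟩
  · simp_all
  · rwa [List.head?_append_of_ne_nil _ hne]

theorem IsPath.pathLen_concat {i j : V} {l : List V} (hl : IsPath A i j l) (q : V → ℝ) (k : V) :
    PathLen q (l ++ [k]) = PathLen q l + q j := by
  obtain ⟨m, rfl⟩ := List.getLast?_eq_some_iff.1 hl.2.2.2
  simp [PathLen]

theorem IsPath.eq_singleton_of_acyclic (hacyc : ∀ v, ¬ Relation.TransGen A v v) {i : V}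
    {l : List V} (hl : IsPath A i i l) : l = [i] := by
  obtain ⟨-, hc, hh, hg⟩ := hl
  obtain ⟨m, rfl⟩ := List.head?_eq_some_iff.1 hh
  rcases m with _ | ⟨b, m⟩
  · rfl
  · obtain ⟨hib, hc'⟩ := List.isChain_cons_cons.1 hc
    have hbi : Relation.ReflTransGen A b i :=
      List.relationReflTransGen_of_exists_isChain_cons m hc' (by simpa [List.getLast?_eq_some_getLast] using hg)
    exact absurd (Relation.TransGen.head' hib hbi) (hacyc i)

theorem Sched.pathLen_le {s : V} {q y : V → ℝ} (hy : Sched A s q y) :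
    ∀ {i j : V} {l : List V}, IsPath A i j l → PathLen q l ≤ y j - y i
  | i, j, [], hl => absurd rfl hl.1
  | i, j, [a], hl => by
    obtain ⟨-, -, hh, hg⟩ := hl
    simp_all [PathLen]
  | i, j, a :: b :: l, hl => by
    obtain ⟨-, hc, hh, hg⟩ := hl
    obtain rfl : a = i := by simpa using hh
    obtain ⟨hib, hc'⟩ := List.isChain_cons_cons.1 hc
    have htail : IsPath A b j (b :: l) := ⟨List.cons_ne_nil _ _, hc', rfl, by simpa using hg⟩
    have harc := hy.2.2 a b hib
    have := hy.pathLen_le htail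
    rw [htail.pathLen_cons]
    linarith

end Paths

section LongestPaths

variable {V : Type*} {A : V → V → Prop} {q : V → ℝ}

theorem IsLongest.nonneg (hq : ∀ v, 0 ≤ q v) {i j : V} {L : ℝ} (h : IsLongest A q i j L) :
    0 ≤ L := by
  obtain ⟨l, -, rfl⟩ := h.1
  exact pathLen_nonneg hq l

theorem IsLongest.eq_zero_of_acyclic (hacyc : ∀ v, ¬ Relation.TransGen A v v) {i : V} {L : ℝ}
    (h : IsLongest A q i i L) : L = 0 := by
  obtain ⟨l, hl, rfl⟩ := h.1
  simp [hl.eq_singleton_of_acyclic hacyc, PathLen]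

theorem Sched.isLongest_le {s : V} {y : V → ℝ} (hy : Sched A s q y) {i j : V} {L : ℝ}
    (h : IsLongest A q i j L) : L ≤ y j - y i := by
  obtain ⟨l, hl, rfl⟩ := h.1
  exact hy.pathLen_le hl

theorem IsLongest.add_le_of_rel_target {s i j : V} {a b : ℝ} (hi : IsLongest A q s i a)
    (hj : IsLongest A q s j b) (hij : A i j) : a + q i ≤ b := by
  obtain ⟨l, hl, rfl⟩ := hi.1
  rw [← hl.pathLen_concat q j]
  exact hj.2 ⟨_, hl.concat hij, rfl⟩

theorem IsLongest.add_le_of_rel_source {i j t : V} {a b : ℝ} (hi : IsLongest A q i t a)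
    (hj : IsLongest A q j t b) (hij : A i j) : q i + b ≤ a := by
  obtain ⟨l, hl, rfl⟩ := hj.1
  rw [← hl.pathLen_cons q i]
  exact hi.2 ⟨_, hl.cons hij, rfl⟩

theorem isLongest_le_of_transGen (hq : ∀ v, 0 ≤ q v) {t : V} {L : V → ℝ}
    (hL : ∀ j, IsLongest A q j t (L j)) {i j : V} (hij : Relation.TransGen A i j) :
    L j ≤ L i := by
  induction hij with
  | single hab => linarith [(hL _).add_le_of_rel_source (hL _) hab, hq i]
  | @tail b c _ hbc ih => linarith [(hL b).add_le_of_rel_source (hL c) hbc, hq b]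

end LongestPaths

section Schedules

variable {V : Type*} {A : V → V → Prop} {s : V}

theorem Sched.mono {q q' y : V → ℝ} (hy : Sched A s q y) (hq : ∀ v, q' v ≤ q v) :
    Sched A s q' y :=
  ⟨hy.1, hy.2.1, fun i j hij => (hq i).trans (hy.2.2 i j hij)⟩

theorem Sched.pointwise_min {q y z : V → ℝ} (hy : Sched A s q y) (hz : ∀ v, 0 ≤ z v)
    (hzq : ∀ i j, A i j → q i ≤ z j - z i) : Sched A s q fun v => min (y v) (z v) := by
  refine ⟨by simp [hy.1, hz s], fun v => le_min (hy.2.1 v) (hz v), fun i j hij => ?_⟩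
  have hyq := hy.2.2 i j hij
  have hzq := hzq i j hij
  have : min (y i) (z i) + q i ≤ min (y j) (z j) :=
    le_min (by linarith [min_le_left (y i) (z i)]) (by linarith [min_le_right (y i) (z i)])
  linarith

theorem sched_of_isLongest (hacyc : ∀ v, ¬ Relation.TransGen A v v) {q L : V → ℝ}
    (hq : ∀ v, 0 ≤ q v) (hL : ∀ j, IsLongest A q s j (L j)) : Sched A s q L :=
  ⟨(hL s).eq_zero_of_acyclic hacyc, fun v => (hL v).nonneg hq,
    fun i j hij => by linarith [(hL i).add_le_of_rel_target (hL j) hij]⟩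

theorem xAnchored_of_sched {p dhat y x : V → ℝ} {Δ : Set (V → ℝ)} {H : Set V}
    (hy : Sched A s (fun v => p v + dhat v) y) (hΔ : ∀ δ ∈ Δ, ∀ v, δ v ≤ dhat v)
    (hxy : ∀ i ∈ H, y i = x i) : XAnchored A s p Δ x H :=
  fun δ hδ => ⟨y, hy.mono fun v => by linarith [hΔ δ hδ v], hxy⟩

theorem XAnchored.isLongest_le {p d x : V → ℝ} {Δ : Set (V → ℝ)} {H : Set V}
    (h : XAnchored A s p Δ x H) (hd : d ∈ Δ) {j : V} {L : ℝ}
    (hL : IsLongest A (fun v => p v + d v) s j L) (hj : j ∈ H) : L ≤ x j := by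
  obtain ⟨y, hy, hyx⟩ := h d hd
  have := hy.isLongest_le hL
  rw [hy.1, hyx j hj] at this
  linarith

end Schedules

theorem box_uncertainty_optimal_solution_general
    {V : Type*} (A : V → V → Prop) (s t : V)
    (p dhat : V → ℝ) (hp : ∀ v, 0 ≤ p v) (hdhat : ∀ v, 0 ≤ dhat v)
    (hacyc : ∀ v, ¬ Relation.TransGen A v v)
    (hsrc : ∀ v, v ≠ s → Relation.TransGen A s v)
    (L0t : V → ℝ) (hL0t : ∀ j, IsLongest A p j t (L0t j))
    (xlo : V → ℝ) (hxlo : ∀ j, IsLongest A (fun v => p v + dhat v) s j (xlo j))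
    (M : ℝ) (hM : L0t s ≤ M)
    (x : V → ℝ) (hx : ∀ v, x v = min (xlo v) (M - L0t v))
    (Hstar : Finset V)
    (hHstar : ∀ j, j ∈ Hstar ↔ j ≠ s ∧ j ≠ t ∧ xlo j ≤ M - L0t j)
    (w : V → ℝ) (hw : ∀ v, 0 ≤ w v) :
    Sched A s p x ∧ x t ≤ M ∧
    XAnchored A s p {δ | ∀ v, 0 ≤ δ v ∧ δ v ≤ dhat v} x ↑Hstar ∧
    ∀ (H : Finset V) (x' : V → ℝ), s ∉ H → t ∉ H →
      Sched A s p x' → x' t ≤ M →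
      XAnchored A s p {δ | ∀ v, 0 ≤ δ v ∧ δ v ≤ dhat v} x' ↑H →
      ∑ i ∈ H, w i ≤ ∑ i ∈ Hstar, w i := by
  have hearliest : Sched A s (fun v => p v + dhat v) xlo :=
    sched_of_isLongest hacyc (fun v => add_nonneg (hp v) (hdhat v)) hxlo
  have hlatest_nonneg (v : V) : 0 ≤ M - L0t v := by
    rcases eq_or_ne v s with rfl | hvs
    · linarith
    · linarith [isLongest_le_of_transGen hp hL0t (hsrc v hvs)]
  have hlatest (i j : V) (hij : A i j) : p i ≤ (M - L0t j) - (M - L0t i) := by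
    linarith [(hL0t i).add_le_of_rel_source (hL0t j) hij]
  have hsched : Sched A s p x := by
    rw [funext hx]
    exact (hearliest.mono fun v => by linarith [hdhat v]).pointwise_min hlatest_nonneg hlatest
  refine ⟨hsched, ?_, ?_, ?_⟩
  · rw [hx, (hL0t t).eq_zero_of_acyclic hacyc, sub_zero]
    exact min_le_right _ _
  · exact xAnchored_of_sched hearliest (fun δ hδ v => (hδ v).2)
      fun i hi => by rw [hx, min_eq_left ((hHstar i).1 hi).2.2]
  · intro H x' hsH htH hx' hx't hanch
    refine Finset.sum_le_sum_of_subset_of_nonneg (fun j hj => ?_) fun i _ _ => hw i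
    have hlo := hanch.isLongest_le (fun v => ⟨hdhat v, le_rfl⟩) (hxlo j) hj
    have hhi := hx'.isLongest_le (hL0t j)
    exact (hHstar j).2 ⟨fun h => hsH (h ▸ hj), fun h => htH (h ▸ hj), by linarith⟩

/-- box uncertainty, optimal solution: with `x̲` the earliest schedule of
`G(p+d̂)`, `x̄` the latest schedule of `G(p)` with makespan `M`, `H* = {i : x̲_i ≤ x̄_i}`
and `x = min(x̲, x̄)`, the pair `(x, H*)` is a feasible solution of (AnchRob) and it is
optimal for any nonnegative anchoring weights. -/
theorem box_uncertainty_optimal_solution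
    {V : Type*} [Fintype V] (A : V → V → Prop) (s t : V)
    (p dhat : V → ℝ) (hp : ∀ v, 0 ≤ p v) (hdhat : ∀ v, 0 ≤ dhat v)
    (hps : p s = 0) (hds : dhat s = 0) (hdt : dhat t = 0)
    (hacyc : ∀ v, ¬ Relation.TransGen A v v)
    (hsrc : ∀ v, v ≠ s → Relation.TransGen A s v)
    (hsink : ∀ v, v ≠ t → Relation.TransGen A v t)
    (L0t : V → ℝ) (hL0t : ∀ j, IsLongest A p j t (L0t j))
    (xlo : V → ℝ) (hxlo : ∀ j, IsLongest A (fun v => p v + dhat v) s j (xlo j))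
    (M : ℝ) (hM : L0t s ≤ M)
    (x : V → ℝ) (hx : ∀ v, x v = min (xlo v) (M - L0t v))
    (Hstar : Finset V)
    (hHstar : ∀ j, j ∈ Hstar ↔ j ≠ s ∧ j ≠ t ∧ xlo j ≤ M - L0t j)
    (w : V → ℝ) (hw : ∀ v, 0 ≤ w v) :
    Sched A s p x ∧ x t ≤ M ∧
    XAnchored A s p {δ | ∀ v, 0 ≤ δ v ∧ δ v ≤ dhat v} x ↑Hstar ∧
    ∀ (H : Finset V) (x' : V → ℝ), s ∉ H → t ∉ H →
      Sched A s p x' → x' t ≤ M →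
      XAnchored A s p {δ | ∀ v, 0 ≤ δ v ∧ δ v ≤ dhat v} x' ↑H →
      ∑ i ∈ H, w i ≤ ∑ i ∈ Hstar, w i :=
  box_uncertainty_optimal_solution_general A s t p dhat hp hdhat hacyc hsrc L0t hL0t xlo hxlo M hM x
    hx Hstar hHstar w hw
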